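/- arXiv:2310.15921 — 3 statements merged into one kernel-verified Lean document; each statement's English description precedes it below -/
import Mathlib

section
/- Let E be a real inner product space, let n, m ≥ 1, let w : Fin n → E and w′ : Fin m → E, and define the mean-pooled sentence embeddings s = (1/n)·Σᵢ wᵢ and s′ = (1/m)·Σⱼ w′ⱼ. Then σ(⟪s, s′⟫) ≥ ∏_{i,j} σ(⟪wᵢ, w′ⱼ⟫)^{1/(n·m)}, where σ is the logistic sigmoid function. -/
/-!
The function `log ∘ σ` is concave, its derivative being `1 - σ`, which is decreasing. By Jensen's
inequality, a weighted geometric mean of values of `σ` is therefore at most `σ` of the weighted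
arithmetic mean of the arguments. Since the inner product of two means is the mean of the pairwise
inner products `⟪wᵢ, w′ⱼ⟫`, taking equal weights `1/(n·m)` gives the bound.
-/

open RealInnerProductSpace

noncomputable def sigmoid (x : ℝ) : ℝ := 1 / (1 + Real.exp (-x))

theorem sigmoid_eq_real_sigmoid : sigmoid = Real.sigmoid :=
  funext fun x => one_div (1 + Real.exp (-x))

theorem Real.hasDerivAt_log_sigmoid (x : ℝ) :
    HasDerivAt (fun y => Real.log (Real.sigmoid y)) (1 - Real.sigmoid x) x := by
  have h := (Real.hasDerivAt_sigmoid x).log (Real.sigmoid_pos x).ne'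
  rwa [mul_div_cancel_left₀ _ (Real.sigmoid_pos x).ne'] at h

theorem Real.concaveOn_log_sigmoid :
    ConcaveOn ℝ Set.univ (fun x => Real.log (Real.sigmoid x)) := by
  have hderiv : deriv (fun y => Real.log (Real.sigmoid y)) = fun x => 1 - Real.sigmoid x :=
    funext fun x => (Real.hasDerivAt_log_sigmoid x).deriv
  refine Antitone.concaveOn_univ_of_deriv
    (fun x => (Real.hasDerivAt_log_sigmoid x).differentiableAt) ?_
  rw [hderiv]
  exact fun _ _ hab => sub_le_sub_left (Real.sigmoid_monotone hab) 1

theorem Real.prod_sigmoid_rpow_le_sigmoid_sum {ι : Type*} (t : Finset ι) (c x : ι → ℝ)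
    (hc₀ : ∀ i ∈ t, 0 ≤ c i) (hc₁ : ∑ i ∈ t, c i = 1) :
    ∏ i ∈ t, Real.sigmoid (x i) ^ c i ≤ Real.sigmoid (∑ i ∈ t, c i * x i) := by
  have hjensen : ∑ i ∈ t, c i * Real.log (Real.sigmoid (x i)) ≤
      Real.log (Real.sigmoid (∑ i ∈ t, c i * x i)) :=
    Real.concaveOn_log_sigmoid.le_map_sum hc₀ hc₁ fun _ _ => Set.mem_univ _
  calc ∏ i ∈ t, Real.sigmoid (x i) ^ c i
      = Real.exp (∑ i ∈ t, c i * Real.log (Real.sigmoid (x i))) := by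
        rw [Real.exp_sum]
        refine Finset.prod_congr rfl fun i _ => ?_
        rw [Real.rpow_def_of_pos (Real.sigmoid_pos _), mul_comm]
    _ ≤ Real.exp (Real.log (Real.sigmoid (∑ i ∈ t, c i * x i))) := Real.exp_le_exp.2 hjensen
    _ = Real.sigmoid (∑ i ∈ t, c i * x i) := Real.exp_log (Real.sigmoid_pos _)

theorem real_inner_smul_sum_smul_sum {E ι κ : Type*} [NormedAddCommGroup E]
    [InnerProductSpace ℝ E] (s : Finset ι) (t : Finset κ) (a b : ℝ) (v : ι → E) (u : κ → E) :
    ⟪a • ∑ i ∈ s, v i, b • ∑ j ∈ t, u j⟫ = ∑ i ∈ s, ∑ j ∈ t, a * b * ⟪v i, u j⟫ := by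
  rw [real_inner_smul_left, real_inner_smul_right, sum_inner, Finset.mul_sum, Finset.mul_sum]
  refine Finset.sum_congr rfl fun i _ => ?_
  rw [inner_sum, Finset.mul_sum, Finset.mul_sum]
  exact Finset.sum_congr rfl fun j _ => by ring

/-- Lower bound for the positive-pair probability under mean pooling:
if `s = (1/n)·Σᵢ wᵢ` and `s′ = (1/m)·Σⱼ w′ⱼ`, then
`σ(⟪s, s′⟫) ≥ ∏_{i,j} σ(⟪wᵢ, w′ⱼ⟫)^{1/(n·m)}`. -/
theorem sigmoid_inner_mean_pool_ge
    {E : Type*} [NormedAddCommGroup E] [InnerProductSpace ℝ E]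
    (n m : ℕ) (hn : 1 ≤ n) (hm : 1 ≤ m)
    (w : Fin n → E) (w' : Fin m → E)
    (s s' : E)
    (hs : s = (1 / (n : ℝ)) • ∑ i, w i)
    (hs' : s' = (1 / (m : ℝ)) • ∑ j, w' j) :
    sigmoid ⟪s, s'⟫ ≥
      ∏ i, ∏ j, sigmoid ⟪w i, w' j⟫ ^ (1 / ((n : ℝ) * (m : ℝ))) := by
  set c : ℝ := 1 / ((n : ℝ) * (m : ℝ))
  have hc₁ : ∑ _p : Fin n × Fin m, c = 1 := by
    have hnm : (n : ℝ) * m ≠ 0 := by positivity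
    simp only [Finset.sum_const, Finset.card_univ, Fintype.card_prod, Fintype.card_fin, nsmul_eq_mul,
      Nat.cast_mul, c]
    exact mul_one_div_cancel hnm
  have hinner : ⟪s, s'⟫ = ∑ p : Fin n × Fin m, c * ⟪w p.1, w' p.2⟫ := by
    rw [hs, hs', real_inner_smul_sum_smul_sum, Fintype.sum_prod_type, one_div_mul_one_div]
  rw [sigmoid_eq_real_sigmoid, hinner, ← Fintype.prod_prod_type']
  exact Real.prod_sigmoid_rpow_le_sigmoid_sum _ (fun _ => c) _ (fun _ _ => by positivity) hc₁
end

section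
/- Let E be a real inner product space, let n, m ≥ 1, let w : Fin n → E and w′ : Fin m → E, and define the mean-pooled sentence embeddings s = (1/n)·Σᵢ wᵢ and s′ = (1/m)·Σⱼ w′ⱼ. Then 1 − σ(⟪s, s′⟫) ≥ ∏_{i,j} (1 − σ(⟪wᵢ, w′ⱼ⟫))^{1/(n·m)}, where σ is the logistic sigmoid function. -/
open RealInnerProductSpace

/-! Since `1 - σ x = (1 + exp x)⁻¹` and `⟪s, s'⟫` is the uniform average of the `⟪w i, w' j⟫`,
the claim is log-concavity of `1 - σ`. It follows from superadditivity of the weighted geometric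
mean, `∏ aᵢ ^ wᵢ + ∏ bᵢ ^ wᵢ ≤ ∏ (aᵢ + bᵢ) ^ wᵢ`, applied to `aᵢ = 1`, `bᵢ = exp xᵢ`. -/

open Finset

theorem Real.prod_rpow_add_prod_rpow_le {ι : Type*} (s : Finset ι) {w a b : ι → ℝ}
    (hw : ∀ i ∈ s, 0 ≤ w i) (hw₁ : ∑ i ∈ s, w i = 1) (ha : ∀ i ∈ s, 0 ≤ a i)
    (hb : ∀ i ∈ s, 0 ≤ b i) (hab : ∀ i ∈ s, 0 < a i + b i) :
    ∏ i ∈ s, a i ^ w i + ∏ i ∈ s, b i ^ w i ≤ ∏ i ∈ s, (a i + b i) ^ w i := by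
  -- Weighted AM-GM for the fractions `a i / (a i + b i)` and `b i / (a i + b i)`, which sum to 1.
  have hdiv : ∀ f : ι → ℝ, (∀ i ∈ s, 0 ≤ f i) →
      ∏ i ∈ s, (f i / (a i + b i)) ^ w i = (∏ i ∈ s, f i ^ w i) / ∏ i ∈ s, (a i + b i) ^ w i :=
    fun f hf => by
      rw [← prod_div_distrib]
      exact prod_congr rfl fun i hi => div_rpow (hf i hi) (hab i hi).le _
  have hA := geom_mean_le_arith_mean_weighted s w (fun i => a i / (a i + b i)) hw hw₁
    fun i hi => div_nonneg (ha i hi) (hab i hi).le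
  have hB := geom_mean_le_arith_mean_weighted s w (fun i => b i / (a i + b i)) hw hw₁
    fun i hi => div_nonneg (hb i hi) (hab i hi).le
  have hsum : ∑ i ∈ s, w i * (a i / (a i + b i)) + ∑ i ∈ s, w i * (b i / (a i + b i)) = 1 := by
    rw [← sum_add_distrib, ← hw₁]
    refine sum_congr rfl fun i hi => ?_
    rw [← mul_add, ← add_div, div_self (hab i hi).ne', mul_one]
  have hC : 0 < ∏ i ∈ s, (a i + b i) ^ w i := prod_pos fun i hi => rpow_pos_of_pos (hab i hi) _
  rw [hdiv a ha] at hA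
  rw [hdiv b hb] at hB
  rw [← div_le_one hC, add_div]
  linarith

theorem Real.one_add_exp_sum_mul_le_prod_rpow {ι : Type*} (s : Finset ι) {w x : ι → ℝ}
    (hw : ∀ i ∈ s, 0 ≤ w i) (hw₁ : ∑ i ∈ s, w i = 1) :
    1 + Real.exp (∑ i ∈ s, w i * x i) ≤ ∏ i ∈ s, (1 + Real.exp (x i)) ^ w i := by
  have h := Real.prod_rpow_add_prod_rpow_le s (a := 1) (b := fun i => Real.exp (x i)) hw hw₁
    (fun _ _ => zero_le_one) (fun _ _ => (Real.exp_pos _).le)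
    (fun _ _ => add_pos one_pos (Real.exp_pos _))
  simpa only [Pi.one_apply, Real.one_rpow, prod_const_one, ← Real.exp_mul, ← Real.exp_sum,
    mul_comm (x _)] using h

theorem one_sub_sigmoid_eq_inv (x : ℝ) : 1 - sigmoid x = (1 + Real.exp x)⁻¹ := by
  rw [show sigmoid x = Real.sigmoid x from one_div _, ← Real.sigmoid_neg, Real.sigmoid_def,
    neg_neg]

theorem prod_one_sub_sigmoid_rpow_le {ι : Type*} (s : Finset ι) {w x : ι → ℝ}
    (hw : ∀ i ∈ s, 0 ≤ w i) (hw₁ : ∑ i ∈ s, w i = 1) :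
    ∏ i ∈ s, (1 - sigmoid (x i)) ^ w i ≤ 1 - sigmoid (∑ i ∈ s, w i * x i) := by
  simp only [one_sub_sigmoid_eq_inv]
  rw [prod_congr rfl fun i _ => Real.inv_rpow (by positivity) (w i), prod_inv_distrib]
  exact inv_anti₀ (by positivity) (Real.one_add_exp_sum_mul_le_prod_rpow s hw hw₁)

theorem inner_smul_sum_smul_sum {E ι κ : Type*} [NormedAddCommGroup E] [InnerProductSpace ℝ E]
    (s : Finset ι) (t : Finset κ) (c d : ℝ) (u : ι → E) (v : κ → E) :
    ⟪c • ∑ i ∈ s, u i, d • ∑ j ∈ t, v j⟫ = ∑ p ∈ s ×ˢ t, c * d * ⟪u p.1, v p.2⟫ := by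
  rw [real_inner_smul_left, real_inner_smul_right, sum_inner, sum_product, mul_sum, mul_sum]
  refine sum_congr rfl fun i _ => ?_
  rw [inner_sum, mul_sum, mul_sum]
  exact sum_congr rfl fun j _ => by ring

/-- Lower bound for the negative-pair probability under mean pooling:
if `s = (1/n)·Σᵢ wᵢ` and `s′ = (1/m)·Σⱼ w′ⱼ`, then
`1 − σ(⟪s, s′⟫) ≥ ∏_{i,j} (1 − σ(⟪wᵢ, w′ⱼ⟫))^{1/(n·m)}`. -/
theorem one_sub_sigmoid_inner_mean_pool_ge
    {E : Type*} [NormedAddCommGroup E] [InnerProductSpace ℝ E]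
    (n m : ℕ) (hn : 1 ≤ n) (hm : 1 ≤ m)
    (w : Fin n → E) (w' : Fin m → E)
    (s s' : E)
    (hs : s = (1 / (n : ℝ)) • ∑ i, w i)
    (hs' : s' = (1 / (m : ℝ)) • ∑ j, w' j) :
    1 - sigmoid ⟪s, s'⟫ ≥
      ∏ i, ∏ j, (1 - sigmoid ⟪w i, w' j⟫) ^ (1 / ((n : ℝ) * (m : ℝ))) := by
  have hweights : ∑ _p : Fin n × Fin m, 1 / ((n : ℝ) * m) = 1 := by
    simp only [sum_const, card_univ, Fintype.card_prod, Fintype.card_fin, nsmul_eq_mul]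
    push_cast
    field_simp
  rw [hs, hs', inner_smul_sum_smul_sum, ← Fintype.prod_prod_type', one_div_mul_one_div]
  exact prod_one_sub_sigmoid_rpow_le univ (fun _ _ => by positivity) hweights
end

section
/- Let E be a real inner product space and n ≥ 1 a fixed sentence length. Let K and L be finite index sets of positive and negative sentence pairs respectively; for each k ∈ K let w_k, w′_k : Fin n → E with mean-pooled embeddings s_k = (1/n)·Σᵢ w_{k,i} and s′_k = (1/n)·Σⱼ w′_{k,j}, and similarly for each l ∈ L. Then ∏_{k∈K} σ(⟪s_k, s′_k⟫) · ∏_{l∈L} (1 − σ(⟪s_l, s′_l⟫)) ≥ ( ∏_{k∈K} ∏_{i,j} σ(⟪w_{k,i}, w′_{k,j}⟫) · ∏_{l∈L} ∏_{i,j} (1 − σ(⟪w_{l,i}, w′_{l,j}⟫)) )^{1/n²}, where σ is the logistic sigmoid function. -/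
open RealInnerProductSpace

-- Inside `namespace Real`, `sigmoid` is Mathlib's `Real.sigmoid`.
namespace Real

theorem hasDerivAt_log_sigmoid_s7 (x : ℝ) :
    HasDerivAt (fun y => log (sigmoid y)) (sigmoid (-x)) x := by
  convert (hasDerivAt_sigmoid x).log (sigmoid_pos x).ne' using 1
  rw [sigmoid_neg]
  field_simp [(sigmoid_pos x).ne']

theorem concaveOn_log_sigmoid_s7 : ConcaveOn ℝ Set.univ (fun x => log (sigmoid x)) := by
  refine Antitone.concaveOn_univ_of_deriv
    (fun x => (hasDerivAt_log_sigmoid_s7 x).differentiableAt) ?_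
  rw [funext fun x => (hasDerivAt_log_sigmoid_s7 x).deriv]
  exact sigmoid_monotone.comp_antitone fun _ _ => neg_le_neg

theorem prod_sigmoid_rpow_le_sigmoid_sum_s7 {ι : Type*} (s : Finset ι) (w x : ι → ℝ)
    (hw : ∀ i ∈ s, 0 ≤ w i) (hw₁ : ∑ i ∈ s, w i = 1) :
    ∏ i ∈ s, sigmoid (x i) ^ w i ≤ sigmoid (∑ i ∈ s, w i * x i) := by
  have jensen := concaveOn_log_sigmoid_s7.le_map_sum hw hw₁ fun i _ => Set.mem_univ (x i)
  simp only [smul_eq_mul] at jensen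
  calc ∏ i ∈ s, sigmoid (x i) ^ w i = exp (∑ i ∈ s, w i * log (sigmoid (x i))) := by
        rw [exp_sum]
        exact Finset.prod_congr rfl fun i _ => by rw [rpow_def_of_pos (sigmoid_pos _), mul_comm]
    _ ≤ exp (log (sigmoid (∑ i ∈ s, w i * x i))) := exp_le_exp.mpr jensen
    _ = sigmoid (∑ i ∈ s, w i * x i) := exp_log (sigmoid_pos _)

end Real

theorem one_sub_sigmoid (x : ℝ) : 1 - sigmoid x = sigmoid (-x) := by
  rw [sigmoid_eq_real_sigmoid, Real.sigmoid_neg]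

section MeanPooling

variable {E : Type*} [NormedAddCommGroup E] [InnerProductSpace ℝ E]
  {ι : Type*} [Fintype ι]

theorem inner_mean_mean (a b : ι → E) :
    ⟪(1 / (Fintype.card ι : ℝ)) • ∑ i, a i, (1 / (Fintype.card ι : ℝ)) • ∑ j, b j⟫ =
      ∑ p : ι × ι, 1 / (Fintype.card ι : ℝ) ^ 2 * ⟪a p.1, b p.2⟫ := by
  rw [real_inner_smul_left, real_inner_smul_right, sum_inner, Fintype.sum_prod_type]
  simp only [inner_sum, Finset.mul_sum]
  exact Finset.sum_congr rfl fun i _ => Finset.sum_congr rfl fun j _ => by ring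

theorem prod_sigmoid_inner_rpow_le_sigmoid_inner_mean [Nonempty ι] (a b : ι → E) :
    (∏ i, ∏ j, sigmoid ⟪a i, b j⟫) ^ (1 / (Fintype.card ι : ℝ) ^ 2) ≤
      sigmoid ⟪(1 / (Fintype.card ι : ℝ)) • ∑ i, a i,
        (1 / (Fintype.card ι : ℝ)) • ∑ j, b j⟫ := by
  have hweights : ∑ _p : ι × ι, 1 / (Fintype.card ι : ℝ) ^ 2 = 1 := by
    have hcard : (Fintype.card ι : ℝ) ≠ 0 := Nat.cast_ne_zero.mpr Fintype.card_ne_zero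
    simp only [Finset.sum_const, Finset.card_univ, Fintype.card_prod, nsmul_eq_mul, Nat.cast_mul]
    field_simp
  rw [inner_mean_mean, ← Fintype.prod_prod_type', sigmoid_eq_real_sigmoid,
    ← Real.finsetProd_rpow _ _ fun _ _ => (Real.sigmoid_pos _).le]
  exact Real.prod_sigmoid_rpow_le_sigmoid_sum_s7 _ _ _ (fun _ _ => by positivity) hweights

theorem prod_prod_sigmoid_inner_rpow_le [Nonempty ι] {K : Type*} [Fintype K]
    (a b : K → ι → E) :
    (∏ k, ∏ i, ∏ j, sigmoid ⟪a k i, b k j⟫) ^ (1 / (Fintype.card ι : ℝ) ^ 2) ≤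
      ∏ k, sigmoid ⟪(1 / (Fintype.card ι : ℝ)) • ∑ i, a k i,
        (1 / (Fintype.card ι : ℝ)) • ∑ j, b k j⟫ := by
  rw [← Real.finsetProd_rpow _ _ fun _ _ => by unfold sigmoid; positivity]
  exact Finset.prod_le_prod (fun _ _ => by unfold sigmoid; positivity)
    fun k _ => prod_sigmoid_inner_rpow_le_sigmoid_inner_mean (a k) (b k)

end MeanPooling

/-- Lower bound on the contrastive likelihood (Equations 10–12): with all
sentences of length `n`, positive pairs indexed by `K` and negative pairs
indexed by `L`, and mean-pooled sentence embeddings,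
`∏_K σ(⟪s_k, s′_k⟫) · ∏_L (1 − σ(⟪s_l, s′_l⟫))`
`≥ (∏_K ∏_{i,j} σ(⟪w_{k,i}, w′_{k,j}⟫) · ∏_L ∏_{i,j} (1 − σ(⟪w_{l,i}, w′_{l,j}⟫)))^{1/n²}`. -/
theorem contrastive_likelihood_lower_bound
    {E : Type*} [NormedAddCommGroup E] [InnerProductSpace ℝ E]
    (n : ℕ) (hn : 1 ≤ n)
    {K L : Type*} [Fintype K] [Fintype L]
    (w w' : K → Fin n → E) (v v' : L → Fin n → E)
    (s s' : K → E) (t t' : L → E)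
    (hs : ∀ k, s k = (1 / (n : ℝ)) • ∑ i, w k i)
    (hs' : ∀ k, s' k = (1 / (n : ℝ)) • ∑ j, w' k j)
    (ht : ∀ l, t l = (1 / (n : ℝ)) • ∑ i, v l i)
    (ht' : ∀ l, t' l = (1 / (n : ℝ)) • ∑ j, v' l j) :
    (∏ k, sigmoid ⟪s k, s' k⟫) * (∏ l, (1 - sigmoid ⟪t l, t' l⟫)) ≥
      ((∏ k, ∏ i, ∏ j, sigmoid ⟪w k i, w' k j⟫) *
        (∏ l, ∏ i, ∏ j, (1 - sigmoid ⟪v l i, v' l j⟫))) ^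
          (1 / ((n : ℝ) ^ 2)) := by
  have : Nonempty (Fin n) := Fin.pos_iff_nonempty.mp hn
  simp only [one_sub_sigmoid, ← inner_neg_left, hs, hs', ht, ht', ← smul_neg,
    ← Finset.sum_neg_distrib]
  have positive := prod_prod_sigmoid_inner_rpow_le w w'
  have negative := prod_prod_sigmoid_inner_rpow_le (fun l i => -v l i) v'
  rw [Fintype.card_fin] at positive negative
  rw [ge_iff_le, Real.mul_rpow (by unfold sigmoid; positivity) (by unfold sigmoid; positivity)]
  exact mul_le_mul positive negative (by unfold sigmoid; positivity)
    (by unfold sigmoid; positivity)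
end
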